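/- For four points at the vertices of a unit square, the maximum total area π(4 − 2√2) is realized by the configuration with two diagonally opposite disks of radius √2/2 and the other two of radius 1 − √2/2, and also by the configuration with two diagonally opposite disks of radii 1 and √2 − 1 (and the other two of radius 0). -/
import Mathlib


open Real Finset

/-- The four vertices of the unit square in the Euclidean plane,
listed in cyclic order (so indices 0,2 and 1,3 are diagonally opposite). -/
noncomputable def unitSquare : Fin 4 → EuclideanSpace ℝ (Fin 2) :=
  ![(WithLp.equiv 2 (Fin 2 → ℝ)).symm ![0, 0], (WithLp.equiv 2 (Fin 2 → ℝ)).symm ![1, 0],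
    (WithLp.equiv 2 (Fin 2 → ℝ)).symm ![1, 1], (WithLp.equiv 2 (Fin 2 → ℝ)).symm ![0, 1]]

/-- Feasibility of a radius assignment on the unit square vertices. -/
def SqFeasible (r : Fin 4 → ℝ) : Prop :=
  (∀ i, 0 ≤ r i) ∧
  ∀ i j : Fin 4, i ≠ j → r i + r j ≤ dist (unitSquare i) (unitSquare j)

lemma key (s a b c d : ℝ) (hs : s^2 = 2) (hs1 : 1 ≤ s)
    (ha : 0 ≤ a) (hb : 0 ≤ b) (hc : 0 ≤ c) (hd : 0 ≤ d)
    (h1 : a+b ≤ 1) (h4 : d+a ≤ 1)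
    (h5 : a+c ≤ s)
    (hba : b ≤ a) (hca : c ≤ a) (hda : d ≤ a) :
    a^2+b^2+c^2+d^2 ≤ 4-2*s := by
  have eb : b^2 ≤ a^2 := pow_le_pow_left₀ hb hba 2
  have ec : c^2 ≤ a^2 := pow_le_pow_left₀ hc hca 2
  have ed : d^2 ≤ a^2 := pow_le_pow_left₀ hd hda 2
  rcases le_or_gt a (1 - s/2) with h | h
  · have e4 : a^2 ≤ (1-s/2)^2 := pow_le_pow_left₀ ha h 2
    nlinarith [e4, eb, ec, ed]
  · have eb' : b^2 ≤ (1-a)^2 := pow_le_pow_left₀ hb (by linarith) 2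
    have ed' : d^2 ≤ (1-a)^2 := pow_le_pow_left₀ hd (by linarith) 2
    rcases le_or_gt a (s/2) with h' | h'
    · nlinarith [mul_nonneg (by linarith : (0:ℝ) ≤ s/2 - a) (by linarith : (0:ℝ) ≤ a - (1 - s/2)), eb', ed', ec]
    · have ha1 : a ≤ 1 := by linarith
      have ec' : c^2 ≤ (s-a)^2 := pow_le_pow_left₀ hc (by linarith) 2
      nlinarith [mul_nonneg (by linarith : (0:ℝ) ≤ 2*a - s) (by linarith : (0:ℝ) ≤ 1 - a), eb', ed', ec']

lemma key2 (s a b c d : ℝ) (hs : s^2 = 2) (hs1 : 1 ≤ s)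
    (ha : 0 ≤ a) (hb : 0 ≤ b) (hc : 0 ≤ c) (hd : 0 ≤ d)
    (h1 : a+b ≤ 1) (h2 : b+c ≤ 1) (h3 : c+d ≤ 1) (h4 : d+a ≤ 1)
    (h5 : a+c ≤ s) (h6 : b+d ≤ s) :
    a^2+b^2+c^2+d^2 ≤ 4-2*s := by
  rcases le_total c a with hca | hca <;> rcases le_total d b with hdb | hdb
  · rcases le_total b a with hba | hba
    · linarith [key s a b c d hs hs1 ha hb hc hd h1 h4 h5 hba hca (by linarith)]
    · linarith [key s b c d a hs hs1 hb hc hd ha h2 h1 (by linarith) (by linarith) (by linarith) hba]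
  · rcases le_total d a with hda | hda
    · linarith [key s a b c d hs hs1 ha hb hc hd h1 h4 h5 (by linarith) hca hda]
    · linarith [key s d a b c hs hs1 hd ha hb hc h4 h3 (by linarith) hda (by linarith) (by linarith)]
  · rcases le_total b c with hbc | hbc
    · linarith [key s c d a b hs hs1 hc hd ha hb h3 h2 (by linarith) (by linarith) (by linarith) hbc]
    · linarith [key s b c d a hs hs1 hb hc hd ha h2 h1 (by linarith) hbc (by linarith) (by linarith)]
  · rcases le_total d c with hdc | hdc
    · linarith [key s c d a b hs hs1 hc hd ha hb h3 h2 (by linarith) hdc (by linarith) (by linarith)]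
    · linarith [key s d a b c hs hs1 hd ha hb hc h4 h3 (by linarith) (by linarith) (by linarith) hdc]

lemma dist01 : dist (unitSquare 0) (unitSquare 1) = 1 := by
  simp [unitSquare, EuclideanSpace.dist_eq, Fin.sum_univ_two]
lemma dist12 : dist (unitSquare 1) (unitSquare 2) = 1 := by
  simp [unitSquare, EuclideanSpace.dist_eq, Fin.sum_univ_two]
lemma dist23 : dist (unitSquare 2) (unitSquare 3) = 1 := by
  simp [unitSquare, EuclideanSpace.dist_eq, Fin.sum_univ_two]
lemma dist03 : dist (unitSquare 0) (unitSquare 3) = 1 := by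
  simp [unitSquare, EuclideanSpace.dist_eq, Fin.sum_univ_two]
lemma dist02 : dist (unitSquare 0) (unitSquare 2) = Real.sqrt 2 := by
  simp [unitSquare, EuclideanSpace.dist_eq, Fin.sum_univ_two]; norm_num
lemma dist13 : dist (unitSquare 1) (unitSquare 3) = Real.sqrt 2 := by
  simp [unitSquare, EuclideanSpace.dist_eq, Fin.sum_univ_two]; norm_num

theorem unitSquare_max_realized :
    -- first configuration: diagonally opposite radii √2/2 and 1 - √2/2
    (SqFeasible ![Real.sqrt 2 / 2, 1 - Real.sqrt 2 / 2, Real.sqrt 2 / 2, 1 - Real.sqrt 2 / 2] ∧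
      ∑ i, π * (![Real.sqrt 2 / 2, 1 - Real.sqrt 2 / 2, Real.sqrt 2 / 2, 1 - Real.sqrt 2 / 2] i) ^ 2
        = π * (4 - 2 * Real.sqrt 2)) ∧
    -- second configuration: diagonally opposite radii 1 and √2 − 1, the rest 0
    (SqFeasible ![1, 0, Real.sqrt 2 - 1, 0] ∧
      ∑ i, π * ((![1, 0, Real.sqrt 2 - 1, 0] : Fin 4 → ℝ) i) ^ 2 = π * (4 - 2 * Real.sqrt 2)) ∧
    -- and this common value is the maximum total area
    IsGreatest {A : ℝ | ∃ r : Fin 4 → ℝ, SqFeasible r ∧ A = ∑ i, π * r i ^ 2}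
      (π * (4 - 2 * Real.sqrt 2)) := by
  have hs : Real.sqrt 2 ^ 2 = 2 := Real.sq_sqrt (by norm_num)
  have hs1 : 1 ≤ Real.sqrt 2 := by nlinarith [Real.sqrt_nonneg 2]
  have hs2 : Real.sqrt 2 ≤ 3/2 := by nlinarith [Real.sqrt_nonneg 2]
  set s := Real.sqrt 2 with hsdef
  have feas : ∀ a b c d : ℝ, 0 ≤ a → 0 ≤ b → 0 ≤ c → 0 ≤ d →
      a+b ≤ 1 → b+c ≤ 1 → c+d ≤ 1 → d+a ≤ 1 → a+c ≤ s → b+d ≤ s →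
      SqFeasible ![a,b,c,d] := by
    intro a b c d ha hb hc hd h1 h2 h3 h4 h5 h6
    constructor
    · intro i; fin_cases i <;> simpa
    · intro i j hij
      fin_cases i <;> fin_cases j <;>
        simp_all [dist_comm, dist01, dist12, dist23, dist03, dist02, dist13,
          Matrix.cons_val_zero, Matrix.cons_val_one] <;>
        first
          | linarith
          | (rw [dist_comm]; first
              | (rw [dist01]; linarith) | (rw [dist12]; linarith)
              | (rw [dist23]; linarith) | (rw [dist03]; linarith)
              | (rw [dist02]; linarith) | (rw [dist13]; linarith))
  refine ⟨⟨?_, ?_⟩, ⟨?_, ?_⟩, ?_, ?_⟩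
  · exact feas _ _ _ _ (by positivity) (by nlinarith) (by positivity) (by nlinarith)
      (by norm_num) (by norm_num) (by norm_num) (by norm_num) (by linarith) (by linarith)
  · rw [Fin.sum_univ_four]; simp; linear_combination π * hs
  · exact feas _ _ _ _ (by norm_num) le_rfl (by linarith) le_rfl
      (by norm_num) (by linarith) (by linarith) (by norm_num) (by linarith) (by linarith)
  · rw [Fin.sum_univ_four]; simp; linear_combination π * hs
  · exact ⟨![1, 0, s - 1, 0], feas _ _ _ _ (by norm_num) le_rfl (by linarith) le_rfl
      (by norm_num) (by linarith) (by linarith) (by norm_num) (by linarith) (by linarith),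
      by rw [Fin.sum_univ_four]; simp; linear_combination -π * hs⟩
  · rintro A ⟨r, ⟨hr0, hr⟩, rfl⟩
    have h1 := hr 0 1 (by decide); rw [dist01] at h1
    have h2 := hr 1 2 (by decide); rw [dist12] at h2
    have h3 := hr 2 3 (by decide); rw [dist23] at h3
    have h4 := hr 3 0 (by decide); rw [dist_comm, dist03] at h4
    have h5 := hr 0 2 (by decide); rw [dist02] at h5
    have h6 := hr 1 3 (by decide); rw [dist13] at h6
    have := key2 s (r 0) (r 1) (r 2) (r 3) hs hs1 (hr0 0) (hr0 1) (hr0 2) (hr0 3)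
      h1 h2 h3 h4 h5 h6
    rw [Fin.sum_univ_four]
    nlinarith [Real.pi_pos, this]
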